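/- The type assignment system B of Barbanera–Dezani–de'Liguoro without the universal type ω assigns types only to strongly normalizing pure λ-terms: if B ⊢ M : σ is derivable (without rule (ω) and without axioms (5) and (13) involving ω in the subtyping theory), then M is strongly β-normalizing. -/

import Mathlib

set_option autoImplicit false

namespace LFDelta

/-- Equivalence closure of a relation (conversion). -/
inductive Conv {α : Type} (r : α → α → Prop) : α → α → Prop
| rel {a b : α} : r a b → Conv r a b
| refl (a : α) : Conv r a a
| symm {a b : α} : Conv r a b → Conv r b a
| trans {a b c : α} : Conv r a b → Conv r b c → Conv r a c

/-- Types of the intersection-union type assignment system B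
    (with ⊤, used only for the extended system B⁺). -/
inductive BTy : Type
| atom (a : ℕ)
| top
| arr (σ τ : BTy)
| inter (σ τ : BTy)
| union (σ τ : BTy)
deriving DecidableEq

/-- ω-free types of system B. -/
def BTy.OmegaFree : BTy → Prop
| .atom _ => True
| .top => False
| .arr σ τ => σ.OmegaFree ∧ τ.OmegaFree
| .inter σ τ => σ.OmegaFree ∧ τ.OmegaFree
| .union σ τ => σ.OmegaFree ∧ τ.OmegaFree

/-- Untyped λ-terms (de Bruijn), possibly containing constants
    (the constants c, c_× and c_{|σ|} are used for translations). -/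
inductive Lam : Type
| var (n : ℕ)
| app (M N : Lam)
| lam (M : Lam)
| const (c : ℕ)
| cx
| cty (σ : BTy)
deriving DecidableEq

namespace Lam

/-- Pure λ-terms: no constants. -/
def Pure : Lam → Prop
| .var _ => True
| .app M N => Pure M ∧ Pure N
| .lam M => Pure M
| _ => False

/-- Lift (shift) free variables ≥ c by one. -/
def lift (c : ℕ) : Lam → Lam
| .var n => if n < c then .var n else .var (n+1)
| .app M N => .app (lift c M) (lift c N)
| .lam M => .lam (lift (c+1) M)
| .const k => .const k
| .cx => .cx
| .cty σ => .cty σ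

/-- Substitute N for variable k. -/
def subst (k : ℕ) (N : Lam) : Lam → Lam
| .var n => if n < k then .var n else if n = k then (lift 0)^[k] N else .var (n-1)
| .app M₁ M₂ => .app (subst k N M₁) (subst k N M₂)
| .lam M => .lam (subst (k+1) N M)
| .const c => .const c
| .cx => .cx
| .cty σ => .cty σ

/-- One-step β-reduction. -/
inductive StepB : Lam → Lam → Prop
| beta {M N : Lam} : StepB (.app (.lam M) N) (subst 0 N M)
| appL {M M' N : Lam} : StepB M M' → StepB (.app M N) (.app M' N)
| appR {M N N' : Lam} : StepB N N' → StepB (.app M N) (.app M N')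
| lam {M M' : Lam} : StepB M M' → StepB (.lam M) (.lam M')

/-- One-step η-reduction. -/
inductive StepE : Lam → Lam → Prop
| eta {M : Lam} : StepE (.lam (.app (lift 0 M) (.var 0))) M
| appL {M M' N : Lam} : StepE M M' → StepE (.app M N) (.app M' N)
| appR {M N N' : Lam} : StepE N N' → StepE (.app M N) (.app M N')
| lam {M M' : Lam} : StepE M M' → StepE (.lam M) (.lam M')

/-- β-convertibility. -/
def BetaEq : Lam → Lam → Prop := Conv StepB

/-- βη-convertibility. -/
def BetaEtaEq : Lam → Lam → Prop := Conv (fun a b => StepB a b ∨ StepE a b)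

/-- Strong β-normalization. -/
def SNBeta (M : Lam) : Prop := Acc (fun a b => StepB b a) M

end Lam

/-- The subtype theory Ξ of system B without the ω-axioms (5) and (13),
    i.e. axioms/rules (1)-(4), (6)-(12), (14). -/
inductive SubB : BTy → BTy → Prop
| idemInter {σ : BTy} : SubB σ (.inter σ σ)                                  -- (1)
| idemUnion {σ : BTy} : SubB (.union σ σ) σ                                  -- (2)
| interL {σ τ : BTy} : SubB (.inter σ τ) σ                                   -- (3)
| interR {σ τ : BTy} : SubB (.inter σ τ) τ                                   -- (3)
| unionL {σ τ : BTy} : SubB σ (.union σ τ)                                   -- (4)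
| unionR {σ τ : BTy} : SubB τ (.union σ τ)                                   -- (4)
| refl {σ : BTy} : SubB σ σ                                                  -- (6)
| monoInter {σ₁ σ₂ τ₁ τ₂ : BTy} :
    SubB σ₁ σ₂ → SubB τ₁ τ₂ → SubB (.inter σ₁ τ₁) (.inter σ₂ τ₂)             -- (7)
| monoUnion {σ₁ σ₂ τ₁ τ₂ : BTy} :
    SubB σ₁ σ₂ → SubB τ₁ τ₂ → SubB (.union σ₁ τ₁) (.union σ₂ τ₂)             -- (8)
| trans {σ τ ρ : BTy} : SubB σ τ → SubB τ ρ → SubB σ ρ                        -- (9)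
| dist {σ τ ρ : BTy} :
    SubB (.inter σ (.union τ ρ)) (.union (.inter σ τ) (.inter σ ρ))          -- (10)
| arrInter {σ τ ρ : BTy} :
    SubB (.inter (.arr σ τ) (.arr σ ρ)) (.arr σ (.inter τ ρ))                -- (11)
| arrUnion {σ τ ρ : BTy} :
    SubB (.inter (.arr σ ρ) (.arr τ ρ)) (.arr (.union σ τ) ρ)                -- (12)
| arrow {σ₁ σ₂ τ₁ τ₂ : BTy} :
    SubB σ₂ σ₁ → SubB τ₁ τ₂ → SubB (.arr σ₁ τ₁) (.arr σ₂ τ₂)                  -- (14)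

/-- The subtype theory Ξ' (Ξ without (5), (10), (13)), parametrized by
    additional axioms `ax`. -/
inductive Xi' (ax : BTy → BTy → Prop) : BTy → BTy → Prop
| ax {σ τ : BTy} : ax σ τ → Xi' ax σ τ
| idemInter {σ : BTy} : Xi' ax σ (.inter σ σ)
| idemUnion {σ : BTy} : Xi' ax (.union σ σ) σ
| interL {σ τ : BTy} : Xi' ax (.inter σ τ) σ
| interR {σ τ : BTy} : Xi' ax (.inter σ τ) τ
| unionL {σ τ : BTy} : Xi' ax σ (.union σ τ)
| unionR {σ τ : BTy} : Xi' ax τ (.union σ τ)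
| refl {σ : BTy} : Xi' ax σ σ
| monoInter {σ₁ σ₂ τ₁ τ₂ : BTy} :
    Xi' ax σ₁ σ₂ → Xi' ax τ₁ τ₂ → Xi' ax (.inter σ₁ τ₁) (.inter σ₂ τ₂)
| monoUnion {σ₁ σ₂ τ₁ τ₂ : BTy} :
    Xi' ax σ₁ σ₂ → Xi' ax τ₁ τ₂ → Xi' ax (.union σ₁ τ₁) (.union σ₂ τ₂)
| trans {σ τ ρ : BTy} : Xi' ax σ τ → Xi' ax τ ρ → Xi' ax σ ρ
| arrInter {σ τ ρ : BTy} :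
    Xi' ax (.inter (.arr σ τ) (.arr σ ρ)) (.arr σ (.inter τ ρ))
| arrUnion {σ τ ρ : BTy} :
    Xi' ax (.inter (.arr σ ρ) (.arr τ ρ)) (.arr (.union σ τ) ρ)
| arrow {σ₁ σ₂ τ₁ τ₂ : BTy} :
    Xi' ax σ₂ σ₁ → Xi' ax τ₁ τ₂ → Xi' ax (.arr σ₁ τ₁) (.arr σ₂ τ₂)

/-- Type assignment of system B (Curry style), extended with constant
    typing axioms `ξ` and the constants c_× and c_{|σ|} of B⁺.
    With `ξ := fun _ _ => False` and on pure terms this is exactly system B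
    without ω. -/
inductive BPlus (ξ : ℕ → BTy → Prop) : List BTy → Lam → BTy → Prop
| var {Γ : List BTy} {n : ℕ} {σ : BTy} :
    Γ[n]? = some σ → BPlus ξ Γ (.var n) σ
| const {Γ : List BTy} {c : ℕ} {σ : BTy} : ξ c σ → BPlus ξ Γ (.const c) σ
| cx {Γ : List BTy} : BPlus ξ Γ .cx (.arr .top (.arr .top .top))
| cty {Γ : List BTy} {σ : BTy} :
    BPlus ξ Γ (.cty σ) (.arr .top (.arr (.arr σ .top) .top))
| abs {Γ : List BTy} {M : Lam} {σ τ : BTy} :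
    BPlus ξ (σ :: Γ) M τ → BPlus ξ Γ (.lam M) (.arr σ τ)
| app {Γ : List BTy} {M N : Lam} {σ τ : BTy} :
    BPlus ξ Γ M (.arr σ τ) → BPlus ξ Γ N σ → BPlus ξ Γ (.app M N) τ
| interI {Γ : List BTy} {M : Lam} {σ τ : BTy} :
    BPlus ξ Γ M σ → BPlus ξ Γ M τ → BPlus ξ Γ M (.inter σ τ)
| interEl {Γ : List BTy} {M : Lam} {σ τ : BTy} :
    BPlus ξ Γ M (.inter σ τ) → BPlus ξ Γ M σ
| interEr {Γ : List BTy} {M : Lam} {σ τ : BTy} :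
    BPlus ξ Γ M (.inter σ τ) → BPlus ξ Γ M τ
| unionIl {Γ : List BTy} {M : Lam} {σ τ : BTy} :
    BPlus ξ Γ M σ → BPlus ξ Γ M (.union σ τ)
| unionIr {Γ : List BTy} {M : Lam} {σ τ : BTy} :
    BPlus ξ Γ M τ → BPlus ξ Γ M (.union σ τ)
| unionE {Γ : List BTy} {M N : Lam} {σ τ ρ : BTy} :
    BPlus ξ (σ :: Γ) M ρ → BPlus ξ (τ :: Γ) M ρ → BPlus ξ Γ N (.union σ τ) →
    BPlus ξ Γ (Lam.subst 0 N M) ρ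
| sub {Γ : List BTy} {M : Lam} {σ τ : BTy} :
    BPlus ξ Γ M σ → SubB σ τ → BPlus ξ Γ M τ

/-- The pseudo-terms of LF_Δ: kinds, families and objects in a single syntax
    (the typing judgments single out each syntactic class). -/
inductive Tm : Type
| type                        -- the kind Type
| pi (σ τ : Tm)               -- Πx:σ.K and Πx:σ.τ
| rarr (σ τ : Tm)             -- relevant family σ →ʳ τ
| inter (σ τ : Tm)            -- intersection family
| union (σ τ : Tm)            -- union family
| const (c : ℕ)               -- constants (family- and object-level)
| var (n : ℕ)                 -- variables (de Bruijn)
| lam (σ Δ : Tm)              -- λx:σ.Δ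
| app (Δ₁ Δ₂ : Tm)            -- application (of families and of objects)
| rlam (σ Δ : Tm)             -- relevant abstraction λʳx:σ.Δ
| rapp (Δ₁ Δ₂ : Tm)           -- relevant application
| pair (Δ₁ Δ₂ : Tm)           -- strong pair ⟨Δ₁,Δ₂⟩
| copair (Δ₁ Δ₂ : Tm)         -- strong co-pair [Δ₁,Δ₂]
| prl (Δ : Tm)                -- left projection
| prr (Δ : Tm)                -- right projection
| inl (σ Δ : Tm)              -- injection in_l^σ Δ
| inr (σ Δ : Tm)              -- injection in_r^σ Δ
deriving DecidableEq

namespace Tm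

/-- Lift free variables ≥ c by one. -/
def lift (c : ℕ) : Tm → Tm
| .type => .type
| .pi σ τ => .pi (lift c σ) (lift (c+1) τ)
| .rarr σ τ => .rarr (lift c σ) (lift c τ)
| .inter σ τ => .inter (lift c σ) (lift c τ)
| .union σ τ => .union (lift c σ) (lift c τ)
| .const k => .const k
| .var n => if n < c then .var n else .var (n+1)
| .lam σ Δ => .lam (lift c σ) (lift (c+1) Δ)
| .app Δ₁ Δ₂ => .app (lift c Δ₁) (lift c Δ₂)
| .rlam σ Δ => .rlam (lift c σ) (lift (c+1) Δ)
| .rapp Δ₁ Δ₂ => .rapp (lift c Δ₁) (lift c Δ₂)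
| .pair Δ₁ Δ₂ => .pair (lift c Δ₁) (lift c Δ₂)
| .copair Δ₁ Δ₂ => .copair (lift c Δ₁) (lift c Δ₂)
| .prl Δ => .prl (lift c Δ)
| .prr Δ => .prr (lift c Δ)
| .inl σ Δ => .inl (lift c σ) (lift c Δ)
| .inr σ Δ => .inr (lift c σ) (lift c Δ)

/-- Substitute the object N for variable k. -/
def subst (k : ℕ) (N : Tm) : Tm → Tm
| .type => .type
| .pi σ τ => .pi (subst k N σ) (subst (k+1) N τ)
| .rarr σ τ => .rarr (subst k N σ) (subst k N τ)
| .inter σ τ => .inter (subst k N σ) (subst k N τ)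
| .union σ τ => .union (subst k N σ) (subst k N τ)
| .const c => .const c
| .var n => if n < k then .var n else if n = k then (lift 0)^[k] N else .var (n-1)
| .lam σ Δ => .lam (subst k N σ) (subst (k+1) N Δ)
| .app Δ₁ Δ₂ => .app (subst k N Δ₁) (subst k N Δ₂)
| .rlam σ Δ => .rlam (subst k N σ) (subst (k+1) N Δ)
| .rapp Δ₁ Δ₂ => .rapp (subst k N Δ₁) (subst k N Δ₂)
| .pair Δ₁ Δ₂ => .pair (subst k N Δ₁) (subst k N Δ₂)
| .copair Δ₁ Δ₂ => .copair (subst k N Δ₁) (subst k N Δ₂)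
| .prl Δ => .prl (subst k N Δ)
| .prr Δ => .prr (subst k N Δ)
| .inl σ Δ => .inl (subst k N σ) (subst k N Δ)
| .inr σ Δ => .inr (subst k N σ) (subst k N Δ)

end Tm

/-- The essence function: compositionally erases all type annotations and
    proof-functional constructs (on non-objects it returns a dummy value). -/
def essence : Tm → Lam
| .var n => .var n
| .const c => .const c
| .lam _ Δ => .lam (essence Δ)
| .rlam _ Δ => .lam (essence Δ)
| .app Δ₁ Δ₂ => .app (essence Δ₁) (essence Δ₂)
| .rapp _ Δ₂ => essence Δ₂
| .pair Δ₁ _ => essence Δ₁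
| .copair Δ₁ _ => essence Δ₁
| .prl Δ => essence Δ
| .prr Δ => essence Δ
| .inl _ Δ => essence Δ
| .inr _ Δ => essence Δ
| .type => .const 0
| .pi _ _ => .const 0
| .rarr _ _ => .const 0
| .inter _ _ => .const 0
| .union _ _ => .const 0

/-- One-step reduction →_Δ of LF_Δ. Congruence rules are standard, except
    that the components of strong pairs and co-pairs must reduce in parallel,
    keeping identical essences. -/
inductive Step : Tm → Tm → Prop
| beta {σ Δ₁ Δ₂ : Tm} : Step (.app (.lam σ Δ₁) Δ₂) (Tm.subst 0 Δ₂ Δ₁)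
| rbeta {σ Δ₁ Δ₂ : Tm} : Step (.rapp (.rlam σ Δ₁) Δ₂) (Tm.subst 0 Δ₂ Δ₁)
| prl {Δ₁ Δ₂ : Tm} : Step (.prl (.pair Δ₁ Δ₂)) Δ₁
| prr {Δ₁ Δ₂ : Tm} : Step (.prr (.pair Δ₁ Δ₂)) Δ₂
| coInl {Δ₁ Δ₂ σ Δ₃ : Tm} :
    Step (.app (.copair Δ₁ Δ₂) (.inl σ Δ₃)) (.app Δ₁ Δ₃)
| coInr {Δ₁ Δ₂ σ Δ₃ : Tm} :
    Step (.app (.copair Δ₁ Δ₂) (.inr σ Δ₃)) (.app Δ₂ Δ₃)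
| piL {σ σ' τ : Tm} : Step σ σ' → Step (.pi σ τ) (.pi σ' τ)
| piR {σ τ τ' : Tm} : Step τ τ' → Step (.pi σ τ) (.pi σ τ')
| rarrL {σ σ' τ : Tm} : Step σ σ' → Step (.rarr σ τ) (.rarr σ' τ)
| rarrR {σ τ τ' : Tm} : Step τ τ' → Step (.rarr σ τ) (.rarr σ τ')
| interL {σ σ' τ : Tm} : Step σ σ' → Step (.inter σ τ) (.inter σ' τ)
| interR {σ τ τ' : Tm} : Step τ τ' → Step (.inter σ τ) (.inter σ τ')
| unionL {σ σ' τ : Tm} : Step σ σ' → Step (.union σ τ) (.union σ' τ)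
| unionR {σ τ τ' : Tm} : Step τ τ' → Step (.union σ τ) (.union σ τ')
| lamL {σ σ' Δ : Tm} : Step σ σ' → Step (.lam σ Δ) (.lam σ' Δ)
| lamR {σ Δ Δ' : Tm} : Step Δ Δ' → Step (.lam σ Δ) (.lam σ Δ')
| rlamL {σ σ' Δ : Tm} : Step σ σ' → Step (.rlam σ Δ) (.rlam σ' Δ)
| rlamR {σ Δ Δ' : Tm} : Step Δ Δ' → Step (.rlam σ Δ) (.rlam σ Δ')
| appL {Δ₁ Δ₁' Δ₂ : Tm} : Step Δ₁ Δ₁' → Step (.app Δ₁ Δ₂) (.app Δ₁' Δ₂)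
| appR {Δ₁ Δ₂ Δ₂' : Tm} : Step Δ₂ Δ₂' → Step (.app Δ₁ Δ₂) (.app Δ₁ Δ₂')
| rappL {Δ₁ Δ₁' Δ₂ : Tm} : Step Δ₁ Δ₁' → Step (.rapp Δ₁ Δ₂) (.rapp Δ₁' Δ₂)
| rappR {Δ₁ Δ₂ Δ₂' : Tm} : Step Δ₂ Δ₂' → Step (.rapp Δ₁ Δ₂) (.rapp Δ₁ Δ₂')
| prlC {Δ Δ' : Tm} : Step Δ Δ' → Step (.prl Δ) (.prl Δ')
| prrC {Δ Δ' : Tm} : Step Δ Δ' → Step (.prr Δ) (.prr Δ')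
| inlL {σ σ' Δ : Tm} : Step σ σ' → Step (.inl σ Δ) (.inl σ' Δ)
| inlR {σ Δ Δ' : Tm} : Step Δ Δ' → Step (.inl σ Δ) (.inl σ Δ')
| inrL {σ σ' Δ : Tm} : Step σ σ' → Step (.inr σ Δ) (.inr σ' Δ)
| inrR {σ Δ Δ' : Tm} : Step Δ Δ' → Step (.inr σ Δ) (.inr σ Δ')
| pairC {Δ₁ Δ₁' Δ₂ Δ₂' : Tm} :
    Step Δ₁ Δ₁' → Step Δ₂ Δ₂' → essence Δ₁' = essence Δ₂' →
    Step (.pair Δ₁ Δ₂) (.pair Δ₁' Δ₂')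
| copairC {Δ₁ Δ₁' Δ₂ Δ₂' : Tm} :
    Step Δ₁ Δ₁' → Step Δ₂ Δ₂' → essence Δ₁' = essence Δ₂' →
    Step (.copair Δ₁ Δ₂) (.copair Δ₁' Δ₂')

/-- Definitional equality =_Δ : the symmetric reflexive transitive closure
    of →_Δ. -/
def DefEq : Tm → Tm → Prop := Conv Step

/-- Strong normalization w.r.t. →_Δ. -/
def SNTm (t : Tm) : Prop := Acc (fun a b => Step b a) t

/-- Signature entries: kind declarations a:K and type declarations c:σ. -/
inductive SigEntry : Type
| kd (a : ℕ) (K : Tm)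
| ty (c : ℕ) (σ : Tm)
deriving DecidableEq

abbrev Sig := List SigEntry
abbrev Ctx := List Tm

/-- c is declared in the signature. -/
def inDom (S : Sig) (c : ℕ) : Prop :=
  (∃ K, SigEntry.kd c K ∈ S) ∨ (∃ σ, SigEntry.ty c σ ∈ S)

/-- Context lookup, with the appropriate lifting. -/
inductive VarTy : Ctx → ℕ → Tm → Prop
| zero {Γ : Ctx} {σ : Tm} : VarTy (σ :: Γ) 0 (Tm.lift 0 σ)
| succ {Γ : Ctx} {n : ℕ} {σ τ : Tm} :
    VarTy Γ n σ → VarTy (τ :: Γ) (n+1) (Tm.lift 0 σ)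

mutual
/-- Σ is a valid signature. -/
inductive SigOk : Sig → Prop
| nil : SigOk []
| kd {S : Sig} {a : ℕ} {K : Tm} :
    SigOk S → KindOk S [] K → ¬ inDom S a → SigOk (.kd a K :: S)
| ty {S : Sig} {c : ℕ} {σ : Tm} :
    SigOk S → FamTy S [] σ .type → ¬ inDom S c → SigOk (.ty c σ :: S)

/-- Γ is a valid context in Σ. -/
inductive CtxOk : Sig → Ctx → Prop
| nil {S : Sig} : SigOk S → CtxOk S []
| cons {S : Sig} {Γ : Ctx} {σ : Tm} :
    CtxOk S Γ → FamTy S Γ σ .type → CtxOk S (σ :: Γ)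

/-- K is a kind in Γ and Σ. -/
inductive KindOk : Sig → Ctx → Tm → Prop
| type {S : Sig} {Γ : Ctx} : CtxOk S Γ → KindOk S Γ .type
| pi {S : Sig} {Γ : Ctx} {σ K : Tm} :
    FamTy S Γ σ .type → KindOk S (σ :: Γ) K → KindOk S Γ (.pi σ K)

/-- σ has kind K in Γ and Σ. -/
inductive FamTy : Sig → Ctx → Tm → Tm → Prop
| const {S : Sig} {Γ : Ctx} {a : ℕ} {K : Tm} :
    CtxOk S Γ → SigEntry.kd a K ∈ S → FamTy S Γ (.const a) K
| pi {S : Sig} {Γ : Ctx} {σ τ : Tm} :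
    FamTy S Γ σ .type → FamTy S (σ :: Γ) τ .type → FamTy S Γ (.pi σ τ) .type
| app {S : Sig} {Γ : Ctx} {σ τ K Δ : Tm} :
    FamTy S Γ σ (.pi τ K) → ObjTy S Γ Δ τ →
    FamTy S Γ (.app σ Δ) (Tm.subst 0 Δ K)
| rarr {S : Sig} {Γ : Ctx} {σ τ : Tm} :
    FamTy S Γ σ .type → FamTy S Γ τ .type → FamTy S Γ (.rarr σ τ) .type
| inter {S : Sig} {Γ : Ctx} {σ τ : Tm} :
    FamTy S Γ σ .type → FamTy S Γ τ .type → FamTy S Γ (.inter σ τ) .type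
| union {S : Sig} {Γ : Ctx} {σ τ : Tm} :
    FamTy S Γ σ .type → FamTy S Γ τ .type → FamTy S Γ (.union σ τ) .type
| conv {S : Sig} {Γ : Ctx} {σ K₁ K₂ : Tm} :
    FamTy S Γ σ K₁ → KindOk S Γ K₂ → DefEq K₁ K₂ → FamTy S Γ σ K₂

/-- Δ has type σ in Γ and Σ. -/
inductive ObjTy : Sig → Ctx → Tm → Tm → Prop
| const {S : Sig} {Γ : Ctx} {c : ℕ} {σ : Tm} :
    CtxOk S Γ → SigEntry.ty c σ ∈ S → ObjTy S Γ (.const c) σ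
| var {S : Sig} {Γ : Ctx} {n : ℕ} {σ : Tm} :
    CtxOk S Γ → VarTy Γ n σ → ObjTy S Γ (.var n) σ
| lam {S : Sig} {Γ : Ctx} {σ τ Δ : Tm} :
    ObjTy S (σ :: Γ) Δ τ → ObjTy S Γ (.lam σ Δ) (.pi σ τ)
| app {S : Sig} {Γ : Ctx} {σ τ Δ₁ Δ₂ : Tm} :
    ObjTy S Γ Δ₁ (.pi σ τ) → ObjTy S Γ Δ₂ σ →
    ObjTy S Γ (.app Δ₁ Δ₂) (Tm.subst 0 Δ₂ τ)
| rlam {S : Sig} {Γ : Ctx} {σ τ Δ : Tm} :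
    ObjTy S (σ :: Γ) Δ (Tm.lift 0 τ) →
    Lam.BetaEtaEq (essence Δ) (.var 0) →
    ObjTy S Γ (.rlam σ Δ) (.rarr σ τ)
| rapp {S : Sig} {Γ : Ctx} {σ τ Δ₁ Δ₂ : Tm} :
    ObjTy S Γ Δ₁ (.rarr σ τ) → ObjTy S Γ Δ₂ σ → ObjTy S Γ (.rapp Δ₁ Δ₂) τ
| pair {S : Sig} {Γ : Ctx} {σ τ Δ₁ Δ₂ : Tm} :
    ObjTy S Γ Δ₁ σ → ObjTy S Γ Δ₂ τ →
    Lam.BetaEtaEq (essence Δ₁) (essence Δ₂) →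
    ObjTy S Γ (.pair Δ₁ Δ₂) (.inter σ τ)
| prl {S : Sig} {Γ : Ctx} {σ τ Δ : Tm} :
    ObjTy S Γ Δ (.inter σ τ) → ObjTy S Γ (.prl Δ) σ
| prr {S : Sig} {Γ : Ctx} {σ τ Δ : Tm} :
    ObjTy S Γ Δ (.inter σ τ) → ObjTy S Γ (.prr Δ) τ
| inl {S : Sig} {Γ : Ctx} {σ τ Δ : Tm} :
    ObjTy S Γ Δ σ → FamTy S Γ (.union σ τ) .type →
    ObjTy S Γ (.inl τ Δ) (.union σ τ)
| inr {S : Sig} {Γ : Ctx} {σ τ Δ : Tm} :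
    ObjTy S Γ Δ τ → FamTy S Γ (.union σ τ) .type →
    ObjTy S Γ (.inr σ Δ) (.union σ τ)
| copair {S : Sig} {Γ : Ctx} {σ τ ρ Δ₁ Δ₂ : Tm} :
    ObjTy S Γ Δ₁
      (.pi σ (Tm.subst 0 (.inl (Tm.lift 0 τ) (.var 0)) (Tm.lift 1 ρ))) →
    ObjTy S Γ Δ₂
      (.pi τ (Tm.subst 0 (.inr (Tm.lift 0 σ) (.var 0)) (Tm.lift 1 ρ))) →
    FamTy S (.union σ τ :: Γ) ρ .type →
    Lam.BetaEtaEq (essence Δ₁) (essence Δ₂) →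
    ObjTy S Γ (.copair Δ₁ Δ₂) (.pi (.union σ τ) ρ)
| conv {S : Sig} {Γ : Ctx} {σ τ Δ : Tm} :
    ObjTy S Γ Δ σ → FamTy S Γ τ .type → DefEq σ τ → ObjTy S Γ Δ τ
end

/-- The dependency-erasing translation |·| on families and kinds. -/
def eraseTy : Tm → BTy
| .type => .top
| .pi σ τ => .arr (eraseTy σ) (eraseTy τ)
| .rarr σ τ => .arr (eraseTy σ) (eraseTy τ)
| .inter σ τ => .inter (eraseTy σ) (eraseTy τ)
| .union σ τ => .union (eraseTy σ) (eraseTy τ)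
| .const a => .atom a
| .app σ _ => eraseTy σ
| _ => .top

/-- The forgetful translation ‖·‖ of LF_Δ objects and families into pure
    λ-terms with constants, flattening type annotations into redexes. -/
def tr : Tm → Lam
| .type => .const 0
| .pi σ τ => .app (.app (.cty (eraseTy σ)) (tr σ)) (.lam (tr τ))
| .rarr σ τ => .app (.app .cx (tr σ)) (tr τ)
| .inter σ τ => .app (.app .cx (tr σ)) (tr τ)
| .union σ τ => .app (.app .cx (tr σ)) (tr τ)
| .const c => .const c
| .var n => .var n
| .lam σ Δ => .app (.lam (.lam (Lam.lift 1 (tr Δ)))) (tr σ)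
| .rlam σ Δ => .app (.lam (.lam (Lam.lift 1 (tr Δ)))) (tr σ)
| .app Δ₁ Δ₂ => .app (tr Δ₁) (tr Δ₂)
| .rapp Δ₁ Δ₂ => .app (tr Δ₁) (tr Δ₂)
| .pair Δ₁ _ => tr Δ₁
| .copair Δ₁ _ => tr Δ₁
| .prl Δ => tr Δ
| .prr Δ => tr Δ
| .inl σ Δ => .app (.lam (Lam.lift 0 (tr Δ))) (tr σ)
| .inr σ Δ => .app (.lam (Lam.lift 0 (tr Δ))) (tr σ)

/-- Constant typing axioms of B⁺ induced by a signature. -/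
def sigXi (S : Sig) : ℕ → BTy → Prop :=
  fun c τ => (∃ σ, SigEntry.ty c σ ∈ S ∧ τ = eraseTy σ) ∨
             (∃ K, SigEntry.kd c K ∈ S ∧ τ = eraseTy K)

/-- Embedding of (non-dependent, relevance-free) B types as LF_Δ families. -/
def toFam : BTy → Tm
| .atom a => .const a
| .top => .const 0
| .arr σ τ => .pi (toFam σ) (Tm.lift 0 (toFam τ))
| .inter σ τ => .inter (toFam σ) (toFam τ)
| .union σ τ => .union (toFam σ) (toFam τ)

/-!
Tait–Girard reducibility with saturated sets. A set of terms is saturated if it contains only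
strongly normalizing terms, contains every neutral term (a variable or constant applied to strongly
normalizing arguments) and is closed under weak-head β-expansion with a strongly normalizing
argument. Interpreting atoms as the strongly normalizing terms, `→` as the function space, `∩` as
intersection and `∪` as union gives saturated sets; this is where ω must be absent, since its only
sensible interpretation, the set of all terms, is not saturated. Every axiom and rule of Ξ is then
sound as an inclusion (distributivity because `∩` and `∪` are set operations), and every typing rule
is sound for substitution instances: for (∪E) the instance of the eliminated subject lies in one of
the two sets, and the matching premise applies. Instantiating with the identity substitution
places each typable term in a saturated set.
-/

namespace Lam

open Relation

def scons (N : Lam) (θ : ℕ → Lam) : ℕ → Lam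
  | 0 => N
  | n + 1 => θ n

def up (θ : ℕ → Lam) : ℕ → Lam := scons (.var 0) fun n => lift 0 (θ n)

def psubst (θ : ℕ → Lam) : Lam → Lam
  | .var n => θ n
  | .app M N => .app (psubst θ M) (psubst θ N)
  | .lam M => .lam (psubst (up θ) M)
  | .const c => .const c
  | .cx => .cx
  | .cty σ => .cty σ

theorem lift_lift (M : Lam) {c d : ℕ} (hcd : c ≤ d) :
    lift c (lift d M) = lift (d + 1) (lift c M) := by
  induction M generalizing c d with
  | var n =>
    by_cases hnc : n < c
    · simp [lift, hnc, show n < d by omega, show n < d + 1 by omega]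
    · by_cases hnd : n < d
      · simp [lift, hnc, hnd, show n + 1 < d + 1 by omega]
      · simp [lift, hnc, hnd, show ¬n + 1 < c by omega]
  | app M N ihM ihN => simp only [lift, ihM hcd, ihN hcd]
  | lam M ih => simp only [lift, ih (Nat.succ_le_succ hcd)]
  | const | cx | cty => rfl

theorem lift_eq_psubst (M : Lam) (c : ℕ) :
    lift c M = psubst (fun n => if n < c then .var n else .var (n + 1)) M := by
  induction M generalizing c with
  | var n => rfl
  | app M N ihM ihN => simp only [lift, psubst, ihM, ihN]
  | lam M ih =>
    simp only [lift, psubst, ih (c + 1)]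
    congr 2
    funext n
    cases n with
    | zero => simp [up, scons]
    | succ n => by_cases h : n < c <;> simp [up, scons, lift, h]
  | const | cx | cty => rfl

theorem lift_psubst (M : Lam) (θ : ℕ → Lam) (c : ℕ) :
    lift c (psubst θ M) = psubst (fun n => lift c (θ n)) M := by
  induction M generalizing θ c with
  | var n => rfl
  | app M N ihM ihN => simp only [lift, psubst, ihM, ihN]
  | lam M ih =>
    simp only [lift, psubst, ih]
    congr 2
    funext n
    cases n with
    | zero => simp [up, scons, lift]
    | succ n => exact (lift_lift (θ n) (Nat.zero_le c)).symm
  | const | cx | cty => rfl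

theorem psubst_lift (M : Lam) (θ : ℕ → Lam) (c : ℕ) :
    psubst θ (lift c M) = psubst (fun n => if n < c then θ n else θ (n + 1)) M := by
  induction M generalizing θ c with
  | var n => by_cases h : n < c <;> simp [lift, psubst, h]
  | app M N ihM ihN => simp only [lift, psubst, ihM, ihN]
  | lam M ih =>
    simp only [lift, psubst, ih]
    congr 2
    funext n
    cases n with
    | zero => rfl
    | succ n => by_cases h : n < c <;> simp [up, scons, h]
  | const | cx | cty => rfl

@[simp]
theorem psubst_var (M : Lam) : psubst .var M = M := by
  induction M with
  | var n => rfl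
  | app M N ihM ihN => simp only [psubst, ihM, ihN]
  | lam M ih =>
    have hup : up .var = .var := by
      funext n
      cases n <;> simp [up, scons, lift]
    simp only [psubst, hup, ih]
  | const | cx | cty => rfl

theorem psubst_psubst (M : Lam) (θ θ' : ℕ → Lam) :
    psubst θ (psubst θ' M) = psubst (fun n => psubst θ (θ' n)) M := by
  induction M generalizing θ θ' with
  | var n => rfl
  | app M N ihM ihN => simp only [psubst, ihM, ihN]
  | lam M ih =>
    simp only [psubst, ih]
    congr 2
    funext n
    cases n with
    | zero => rfl
    | succ n => simp [up, scons, psubst_lift, lift_psubst]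
  | const | cx | cty => rfl

theorem subst_eq_psubst (M : Lam) (k : ℕ) (N : Lam) :
    subst k N M =
      psubst (fun n => if n < k then .var n else if n = k then (lift 0)^[k] N else .var (n - 1))
        M := by
  induction M generalizing k with
  | var n => rfl
  | app M₁ M₂ ihM ihN => simp only [subst, psubst, ihM, ihN]
  | lam M ih =>
    simp only [subst, psubst, ih (k + 1)]
    congr 2
    funext n
    cases n with
    | zero => simp [up, scons]
    | succ n =>
      rcases lt_trichotomy n k with h | rfl | h
      · simp [up, scons, lift, h]
      · simp [up, scons, Function.iterate_succ_apply']
      · simp [up, scons, lift, show ¬n < k by omega, show n ≠ k by omega,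
          show n - 1 + 1 = n by omega]
  | const | cx | cty => rfl

theorem subst_zero_eq_psubst (N M : Lam) : subst 0 N M = psubst (scons N .var) M := by
  rw [subst_eq_psubst]
  congr 1
  funext n
  cases n <;> simp [scons]

theorem subst_zero_psubst_up (N : Lam) (θ : ℕ → Lam) (M : Lam) :
    subst 0 N (psubst (up θ) M) = psubst (scons N θ) M := by
  rw [subst_zero_eq_psubst, psubst_psubst]
  congr 1
  funext n
  cases n with
  | zero => rfl
  | succ n => simp [up, scons, psubst_lift]

theorem psubst_subst_zero (θ : ℕ → Lam) (N M : Lam) :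
    psubst θ (subst 0 N M) = psubst (scons (psubst θ N) θ) M := by
  rw [subst_zero_eq_psubst, psubst_psubst]
  congr 1
  funext n
  cases n <;> rfl

theorem StepB.psubst {M M' : Lam} (h : StepB M M') (θ : ℕ → Lam) :
    StepB (psubst θ M) (psubst θ M') := by
  induction h generalizing θ with
  | @beta M N =>
    rw [psubst_subst_zero, ← subst_zero_psubst_up]
    exact .beta
  | appL _ ih => exact .appL (ih θ)
  | appR _ ih => exact .appR (ih θ)
  | lam _ ih => exact .lam (ih (up θ))

theorem StepB.subst_zero {M M' : Lam} (h : StepB M M') (N : Lam) :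
    StepB (subst 0 N M) (subst 0 N M') := by
  simpa only [subst_zero_eq_psubst] using h.psubst _

theorem StepB.lift {M M' : Lam} (h : StepB M M') (c : ℕ) : StepB (lift c M) (lift c M') := by
  simpa only [lift_eq_psubst] using h.psubst _

theorem reflTransGen_psubst (M : Lam) {θ θ' : ℕ → Lam}
    (h : ∀ n, ReflTransGen StepB (θ n) (θ' n)) :
    ReflTransGen StepB (psubst θ M) (psubst θ' M) := by
  induction M generalizing θ θ' with
  | var n => exact h n
  | app M N ihM ihN =>
    exact ((ihM h).lift (Lam.app · _) fun _ _ hs => .appL hs).trans <|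
      (ihN h).lift (Lam.app _ ·) fun _ _ hs => .appR hs
  | lam M ih =>
    refine (ih fun n => ?_).lift _ fun _ _ hs => StepB.lam hs
    cases n with
    | zero => exact .refl
    | succ n => exact (h n).lift _ fun _ _ hs => hs.lift 0
  | const | cx | cty => exact .refl

theorem reflTransGen_subst_zero {N N' : Lam} (h : StepB N N') (M : Lam) :
    ReflTransGen StepB (subst 0 N M) (subst 0 N' M) := by
  simp only [subst_zero_eq_psubst]
  refine reflTransGen_psubst M fun n => ?_
  cases n with
  | zero => exact .single h
  | succ n => exact .refl

theorem SNBeta.of_app_left {M N : Lam} (h : (app M N).SNBeta) : M.SNBeta :=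
  Subrelation.accessible (fun hs => StepB.appL hs) (InvImage.accessible (Lam.app · N) h)

theorem SNBeta.of_reflTransGen {M M' : Lam} (h : M.SNBeta) (hs : ReflTransGen StepB M M') :
    M'.SNBeta := by
  induction hs with
  | refl => exact h
  | tail _ hstep ih => exact ih.inv hstep

def apps (H : Lam) (Ps : List Lam) : Lam := Ps.foldl .app H

theorem apps_append_singleton (H : Lam) (Ps : List Lam) (P : Lam) :
    apps H (Ps ++ [P]) = .app (apps H Ps) P := by
  simp [apps]

theorem StepB.apps_head {H H' : Lam} (h : StepB H H') (Ps : List Lam) :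
    StepB (apps H Ps) (apps H' Ps) := by
  induction Ps generalizing H H' with
  | nil => exact h
  | cons P Ps ih => exact ih (.appL h)

inductive ArgsStep : List Lam → List Lam → Prop
  | head {P P' : Lam} {Ps : List Lam} : StepB P P' → ArgsStep (P :: Ps) (P' :: Ps)
  | tail {P : Lam} {Ps Ps' : List Lam} : ArgsStep Ps Ps' → ArgsStep (P :: Ps) (P :: Ps')

theorem ArgsStep.apps {Ps Ps' : List Lam} (h : ArgsStep Ps Ps') (H : Lam) :
    StepB (apps H Ps) (apps H Ps') := by
  induction h generalizing H with
  | head hs => exact (StepB.appR hs).apps_head _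
  | tail _ ih => exact ih _

theorem StepB.apps_inv {Ps : List Lam} {H Q : Lam} (hH : ∀ H', H ≠ .lam H')
    (h : StepB (apps H Ps) Q) :
    (∃ H', StepB H H' ∧ Q = apps H' Ps) ∨ ∃ Ps', ArgsStep Ps Ps' ∧ Q = apps H Ps' := by
  induction Ps generalizing H with
  | nil => exact .inl ⟨Q, h, rfl⟩
  | cons P Ps ih =>
    rcases ih (by simp) h with ⟨H', hs, rfl⟩ | ⟨Ps', hs, rfl⟩
    · cases hs with
      | beta => exact absurd rfl (hH _)
      | appL hs => exact .inl ⟨_, hs, rfl⟩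
      | appR hs => exact .inr ⟨_, .head hs, rfl⟩
    · exact .inr ⟨P :: Ps', .tail hs, rfl⟩

theorem SNBeta.apps_beta {N : Lam} (hN : N.SNBeta) :
    ∀ {M : Lam} {Ps : List Lam}, (apps (subst 0 N M) Ps).SNBeta →
      (apps (.app (.lam M) N) Ps).SNBeta := by
  induction hN with
  | intro N _ ihN =>
  intro M Ps hX
  generalize hXdef : apps (subst 0 N M) Ps = X at hX
  induction hX generalizing M Ps with
  | intro X hXacc ihX =>
  subst hXdef
  have hX : (apps (subst 0 N M) Ps).SNBeta := .intro _ hXacc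
  refine .intro _ fun Q hQ => ?_
  rcases StepB.apps_inv (by simp) hQ with ⟨H', hs, rfl⟩ | ⟨Ps', hs, rfl⟩
  · cases hs with
    | beta => exact hX
    | appL hs =>
      cases hs with
      | lam hM => exact ihX _ ((hM.subst_zero N).apps_head Ps) rfl
    | appR hN' =>
      exact ihN _ hN' (hX.of_reflTransGen <| (reflTransGen_subst_zero hN' M).lift
        (apps · Ps) fun _ _ hs => hs.apps_head Ps)
  · exact ihX _ (hs.apps _) rfl

inductive Neutral : Lam → Prop
  | var (n : ℕ) : Neutral (.var n)
  | const (c : ℕ) : Neutral (.const c)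
  | cx : Neutral .cx
  | cty (σ : BTy) : Neutral (.cty σ)
  | app {M N : Lam} : Neutral M → N.SNBeta → Neutral (.app M N)

theorem Neutral.ne_lam {M : Lam} (h : Neutral M) (H : Lam) : M ≠ .lam H := by
  cases h <;> simp

theorem Neutral.step {M M' : Lam} (hM : Neutral M) (h : StepB M M') : Neutral M' := by
  induction h with
  | beta => cases hM with | app h _ => exact absurd rfl (h.ne_lam _)
  | appL _ ih => cases hM with | app h hN => exact .app (ih h) hN
  | appR hs => cases hM with | app h hN => exact .app h (hN.inv hs)
  | lam => cases hM

theorem SNBeta.app_of_neutral {M N : Lam} (hMn : Neutral M) (hM : M.SNBeta) (hN : N.SNBeta) :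
    (app M N).SNBeta := by
  induction hM generalizing N with
  | intro M _ ihM =>
  induction hN with
  | intro N hNacc ihN =>
  refine .intro _ fun Q hQ => ?_
  cases hQ with
  | beta => exact absurd rfl (hMn.ne_lam _)
  | appL hs => exact ihM _ hs (hMn.step hs) (.intro N hNacc)
  | appR hs => exact ihN _ hs

theorem Neutral.snBeta {M : Lam} (h : Neutral M) : M.SNBeta := by
  induction h with
  | app hM hN ihM => exact .app_of_neutral hM ihM hN
  | _ => exact .intro _ fun _ hs => by cases hs

end Lam

open Lam

structure Saturated (X : Set Lam) : Prop where
  snBeta : ∀ M ∈ X, M.SNBeta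
  neutral : ∀ M, Neutral M → M ∈ X
  apps_beta : ∀ M N Ps, N.SNBeta → apps (subst 0 N M) Ps ∈ X → apps (.app (.lam M) N) Ps ∈ X

theorem saturated_snBeta : Saturated {M | M.SNBeta} :=
  ⟨fun _ h => h, fun _ h => h.snBeta, fun _ _ _ hN hX => hN.apps_beta hX⟩

def BTy.interp : BTy → Set Lam
  | .atom _ | .top => {M | M.SNBeta}
  | .arr σ τ => {M | ∀ N ∈ σ.interp, .app M N ∈ τ.interp}
  | .inter σ τ => σ.interp ∩ τ.interp
  | .union σ τ => σ.interp ∪ τ.interp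

theorem BTy.saturated_interp : ∀ σ : BTy, Saturated σ.interp
  | .atom _ | .top => saturated_snBeta
  | .arr σ τ =>
    have hσ := saturated_interp σ
    have hτ := saturated_interp τ
    { snBeta := fun M hM =>
        (hτ.snBeta _ (hM _ (hσ.neutral _ (.var 0)))).of_app_left
      neutral := fun M hM N hN => hτ.neutral _ (.app hM (hσ.snBeta N hN))
      apps_beta := fun M N Ps hN hX P hP => by
        simpa only [apps_append_singleton] using
          hτ.apps_beta M N (Ps ++ [P]) hN (by simpa only [apps_append_singleton] using hX P hP) }
  | .inter σ τ =>
    have hσ := saturated_interp σ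
    have hτ := saturated_interp τ
    { snBeta := fun M hM => hσ.snBeta M hM.1
      neutral := fun M hM => ⟨hσ.neutral M hM, hτ.neutral M hM⟩
      apps_beta := fun M N Ps hN hX =>
        ⟨hσ.apps_beta M N Ps hN hX.1, hτ.apps_beta M N Ps hN hX.2⟩ }
  | .union σ τ =>
    have hσ := saturated_interp σ
    have hτ := saturated_interp τ
    { snBeta := fun M hM => hM.elim (hσ.snBeta M) (hτ.snBeta M)
      neutral := fun M hM => .inl (hσ.neutral M hM)
      apps_beta := fun M N Ps hN hX =>
        hX.imp (hσ.apps_beta M N Ps hN) (hτ.apps_beta M N Ps hN) }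

theorem SubB.interp_subset {σ τ : BTy} (h : SubB σ τ) : σ.interp ⊆ τ.interp := by
  induction h with
  | idemInter => exact fun _ hM => ⟨hM, hM⟩
  | idemUnion => exact fun _ hM => hM.elim id id
  | interL => exact Set.inter_subset_left
  | interR => exact Set.inter_subset_right
  | unionL => exact Set.subset_union_left
  | unionR => exact Set.subset_union_right
  | refl => exact subset_rfl
  | monoInter _ _ ih₁ ih₂ => exact Set.inter_subset_inter ih₁ ih₂
  | monoUnion _ _ ih₁ ih₂ => exact Set.union_subset_union ih₁ ih₂
  | trans _ _ ih₁ ih₂ => exact ih₁.trans ih₂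
  | dist => exact (Set.inter_union_distrib_left _ _ _).subset
  | arrInter => exact fun _ hM N hN => ⟨hM.1 N hN, hM.2 N hN⟩
  | arrUnion => exact fun _ hM N hN => hN.elim (hM.1 N) (hM.2 N)
  | arrow _ _ ih₁ ih₂ => exact fun _ hM N hN => ih₂ (hM N (ih₁ hN))

def InterpCtx (Γ : List BTy) (θ : ℕ → Lam) : Prop :=
  ∀ n σ, Γ[n]? = some σ → θ n ∈ σ.interp

theorem InterpCtx.cons {Γ : List BTy} {θ : ℕ → Lam} {σ : BTy} {N : Lam} (hθ : InterpCtx Γ θ)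
    (hN : N ∈ σ.interp) : InterpCtx (σ :: Γ) (scons N θ)
  | 0, _, h => by cases h; exact hN
  | n + 1, τ, h => hθ n τ h

theorem interpCtx_var (Γ : List BTy) : InterpCtx Γ .var :=
  fun n σ _ => (BTy.saturated_interp σ).neutral _ (.var n)

theorem BPlus.psubst_mem_interp {ξ : ℕ → BTy → Prop} {Γ : List BTy} {M : Lam} {σ : BTy}
    (h : BPlus ξ Γ M σ) {θ : ℕ → Lam} (hθ : InterpCtx Γ θ) : psubst θ M ∈ σ.interp := by
  induction h generalizing θ with
  | var hget => exact hθ _ _ hget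
  | @const _ c => exact (BTy.saturated_interp _).neutral _ (.const c)
  | cx => exact (BTy.saturated_interp _).neutral _ .cx
  | @cty _ σ => exact (BTy.saturated_interp _).neutral _ (.cty σ)
  | @abs _ M σ τ _ ih =>
    intro N hN
    have hbody : subst 0 N (psubst (up θ) M) ∈ τ.interp := by
      rw [subst_zero_psubst_up]
      exact ih (hθ.cons hN)
    exact (BTy.saturated_interp τ).apps_beta _ N [] ((BTy.saturated_interp σ).snBeta N hN) hbody
  | app _ _ ih₁ ih₂ => exact ih₁ hθ _ (ih₂ hθ)
  | interI _ _ ih₁ ih₂ => exact ⟨ih₁ hθ, ih₂ hθ⟩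
  | interEl _ ih => exact (ih hθ).1
  | interEr _ ih => exact (ih hθ).2
  | unionIl _ ih => exact .inl (ih hθ)
  | unionIr _ ih => exact .inr (ih hθ)
  | unionE _ _ _ ih₁ ih₂ ih₃ =>
    rw [psubst_subst_zero]
    exact (ih₃ hθ).elim (fun hN => ih₁ (hθ.cons hN)) fun hN => ih₂ (hθ.cons hN)
  | sub _ hsub ih => exact hsub.interp_subset (ih hθ)

theorem BPlus.snBeta {ξ : ℕ → BTy → Prop} {Γ : List BTy} {M : Lam} {σ : BTy}
    (h : BPlus ξ Γ M σ) : M.SNBeta := by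
  have hM : M ∈ σ.interp := by simpa only [psubst_var] using h.psubst_mem_interp (interpCtx_var Γ)
  exact (BTy.saturated_interp σ).snBeta M hM

/-- System B without ω (no constant axioms, pure λ-terms, subtyping theory Ξ
    without the ω-axioms) assigns types only to strongly β-normalizing
    terms. -/
theorem systemB_types_only_SN :
    ∀ (Γ : List BTy) (M : Lam) (σ : BTy),
      M.Pure → BPlus (fun _ _ => False) Γ M σ → M.SNBeta :=
  fun _ _ _ _ h => h.snBeta

end LFDelta
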